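/- arXiv:2203.02353 — 2 statements merged into one kernel-verified Lean document; each statement's English description precedes it below -/
import Mathlib

section
/- For a finite group G, the set of virtual characters with rational values, R_rat(G) = {ρ ∈ R(G) : χ_ρ(g) ∈ ℚ for all g ∈ G}, is spanned as a ℚ-vector space by the induced representations Ind_H^G 1 of the trivial one-dimensional representation, taken over all subgroups H ≤ G. -/
open scoped BigOperators Classical

/-- The induced class function `Ind_H^G φ` of a function `φ` on a subgroup `H ≤ G`. -/
noncomputable def indChar {G : Type*} [Group G] [Fintype G] (H : Subgroup G) (φ : H → ℂ) :
    G → ℂ :=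
  fun g => (Nat.card H : ℂ)⁻¹ *
    ∑ x : G, if h : x⁻¹ * g * x ∈ H then φ ⟨x⁻¹ * g * x, h⟩ else 0

/-- The character `Ind_H^G 1` induced from the trivial representation of `H`. -/
noncomputable def IndTrivChar {G : Type*} [Group G] [Fintype G] (H : Subgroup G) : G → ℂ :=
  indChar H fun _ => 1

/-- `R(G)`: the ℚ-span of the characters of finite-dimensional complex representations. -/
noncomputable def charSpan (G : Type) [Group G] : Submodule ℚ (G → ℂ) :=
  Submodule.span ℚ {f | ∃ V : FDRep ℂ G, f = V.character}

/-- Functions with rational values, as a ℚ-submodule of `G → ℂ`. -/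
noncomputable def ratValued (G : Type*) : Submodule ℚ (G → ℂ) where
  carrier := {f | ∀ g, ∃ q : ℚ, f g = q}
  add_mem' := by
    intro f g hf hg x
    obtain ⟨a, ha⟩ := hf x
    obtain ⟨b, hb⟩ := hg x
    exact ⟨a + b, by simp [ha, hb]⟩
  zero_mem' := fun x => ⟨0, by simp⟩
  smul_mem' := by
    intro c f hf x
    obtain ⟨a, ha⟩ := hf x
    exact ⟨c * a, by simp [ha, Rat.smul_def]⟩

/-- `R_rat(G)`: virtual characters with rational values. -/
noncomputable def Rrat (G : Type) [Group G] : Submodule ℚ (G → ℂ) :=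
  charSpan G ⊓ ratValued G

/-- `S(G)`: the ℚ-span of the induced trivial characters `Ind_H^G 1`. -/
noncomputable def indTrivSpan (G : Type*) [Group G] [Fintype G] : Submodule ℚ (G → ℂ) :=
  Submodule.span ℚ (Set.range (IndTrivChar (G := G)))

/-!
Induced characters `Ind_H^G 1` are permutation characters, hence rational virtual characters.

Conversely, let `f` be a rational virtual character. If `x` has order `n` and `ζ` is a primitive
`n`-th root of unity, the eigenvalues of `ρ x` are powers of `ζ` for every representation `ρ`,
so `f (x ^ k) = p (ζ ^ k)` for a single polynomial `p ∈ ℚ[X]`. For `k` prime to `n`, `ζ ↦ ζ ^ k` is a Galois automorphism of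
`ℚ(ζ)`, which fixes the rational number `f x = p ζ`; so `f (x ^ k) = f x`. Hence `f` is a
ℚ-valued function of the conjugacy class of the cyclic subgroup `⟨x⟩`. Such functions are
combinations of the counting functions `g ↦ #{x | ⟨x⁻¹ g x⟩ = C}`, and summing these over
`C ≤ H` gives `|H| • Ind_H^G 1`, so Möbius inversion over the subgroup lattice puts them in the
span of the induced characters.
-/

open Polynomial Module Finset

theorem IsPrimitiveRoot.aeval_pow_eq_of_aeval_eq_ratCast {K : Type*} [Field K] [CharZero K]
    {n m : ℕ} (hn : 0 < n) (hm : m.Coprime n) {ζ : K} (hζ : IsPrimitiveRoot ζ n)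
    {p : ℚ[X]} {q : ℚ} (h : aeval ζ p = q) : aeval (ζ ^ m) p = q := by
  have hdvd : minpoly ℚ ζ ∣ p - C q := minpoly.dvd ℚ ζ (by simp [h])
  rw [← cyclotomic_eq_minpoly_rat hζ hn,
    cyclotomic_eq_minpoly_rat (hζ.pow_of_coprime m hm) hn] at hdvd
  simpa [sub_eq_zero] using aeval_eq_zero_of_dvd_aeval_eq_zero hdvd (minpoly.aeval ℚ (ζ ^ m))

theorem exists_pow_coprime_eq_of_zpowers_eq {G : Type*} [Group G] {x y : G}
    (hx : IsOfFinOrder x) (hxy : Subgroup.zpowers x = Subgroup.zpowers y) :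
    ∃ k : ℕ, k.Coprime (orderOf x) ∧ x ^ k = y := by
  obtain ⟨k, rfl⟩ := (hx.mem_powers_iff_mem_zpowers).mpr (hxy ▸ Subgroup.mem_zpowers y)
  refine ⟨k, ?_, rfl⟩
  have hord : orderOf x / (orderOf x).gcd k = orderOf x := by
    rw [← hx.orderOf_pow, ← Nat.card_zpowers, ← Nat.card_zpowers, hxy]
  rcases Nat.div_eq_self.mp hord with h | h
  · exact absurd h hx.orderOf_pos.ne'
  · exact Nat.coprime_comm.mp h

namespace Module.End

variable {K V : Type*} [Field K] [AddCommGroup V] [Module K V]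

theorem pow_apply_of_mem_eigenspace {u : End K V} {μ : K} {v : V} (hv : v ∈ u.eigenspace μ)
    (k : ℕ) : (u ^ k) v = μ ^ k • v := by
  induction k with
  | zero => simp
  | succ k ih => rw [pow_succ', mul_apply, ih, map_smul, mem_eigenspace_iff.mp hv, smul_smul,
      pow_succ]

theorem pow_eq_one_of_hasEigenvalue {u : End K V} {n : ℕ} (hun : u ^ n = 1) {μ : K}
    (hμ : u.HasEigenvalue μ) : μ ^ n = 1 := by
  obtain ⟨v, hv⟩ := hμ.exists_hasEigenvector
  have h : μ ^ n • v = (1 : K) • v := by rw [← hv.pow_apply, hun, one_apply, one_smul]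
  exact smul_left_injective K hv.2 h

variable [FiniteDimensional K V] [IsAlgClosed K]

theorem IsSemisimple.exists_trace_pow_eq_sum {u : End K V} (hu : u.IsSemisimple) :
    ∃ s : Finset K, (∀ μ ∈ s, u.HasEigenvalue μ) ∧
      ∀ k : ℕ, LinearMap.trace K V (u ^ k) = ∑ μ ∈ s, finrank K (u.eigenspace μ) * μ ^ k := by
  have hint : DirectSum.IsInternal u.eigenspace :=
    DirectSum.isInternal_submodule_of_iSupIndep_of_iSup_eq_top u.eigenspaces_iSupIndep
      hu.iSup_eigenspace_eq_top
  have hfin : {μ | u.eigenspace μ ≠ ⊥}.Finite :=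
    WellFoundedGT.finite_ne_bot_of_iSupIndep u.eigenspaces_iSupIndep
  refine ⟨hfin.toFinset, fun μ hμ => hasEigenvalue_iff.mpr (by simpa using hμ), fun k => ?_⟩
  have hmaps (μ : K) : Set.MapsTo (u ^ k) (u.eigenspace μ) (u.eigenspace μ) :=
    mapsTo_genEigenspace_of_comm (Commute.pow_right rfl k) μ 1
  rw [LinearMap.trace_eq_sum_trace_restrict' hint hfin hmaps]
  refine Finset.sum_congr rfl fun μ _ => ?_
  have hscalar : (u ^ k).restrict (hmaps μ) = μ ^ k • 1 := by
    ext v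
    exact pow_apply_of_mem_eigenspace v.2 k
  rw [hscalar, map_smul, LinearMap.trace_one, smul_eq_mul, mul_comm]

theorem exists_trace_pow_eq_aeval [CharZero K] {u : End K V} {n : ℕ} (hn : 0 < n)
    (hun : u ^ n = 1) {ζ : K} (hζ : IsPrimitiveRoot ζ n) :
    ∃ p : ℚ[X], ∀ k : ℕ, LinearMap.trace K V (u ^ k) = aeval (ζ ^ k) p := by
  have hsq : Squarefree (X ^ n - C (1 : K)) :=
    (separable_X_pow_sub_C 1 (Nat.cast_ne_zero.mpr hn.ne') one_ne_zero).squarefree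
  obtain ⟨s, hs, htr⟩ := (isSemisimple_of_squarefree_aeval_eq_zero (f := u) hsq
    (by simp [hun])).exists_trace_pow_eq_sum
  have : NeZero n := ⟨hn.ne'⟩
  have hroot (μ : s) : ∃ j < n, ζ ^ j = μ :=
    hζ.eq_pow_of_pow_eq_one (pow_eq_one_of_hasEigenvalue hun (hs μ μ.2))
  choose j _ hj using hroot
  refine ⟨∑ μ : s, (finrank K (u.eigenspace μ) : ℚ[X]) * X ^ j μ, fun k => ?_⟩
  rw [htr, ← Finset.sum_coe_sort s]
  simp only [map_sum, map_mul, map_natCast, map_pow, aeval_X]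
  refine Finset.sum_congr rfl fun μ _ => ?_
  rw [← pow_mul, mul_comm k, pow_mul, hj]

end Module.End

theorem Representation.character_ofMulAction {k G X : Type*} [Field k] [Monoid G]
    [MulAction G X] [Fintype X] (g : G) :
    (Representation.ofMulAction k G X).character g = #{x : X | g • x = x} := by
  rw [Representation.character, LinearMap.trace_eq_matrix_trace k (MonoidAlgebra.basis X k),
    Matrix.trace, ← Finset.sum_boole]
  refine Finset.sum_congr rfl fun x _ => ?_
  simp only [Matrix.diag_apply, LinearMap.toMatrix_apply, MonoidAlgebra.basis_apply,
    Representation.ofMulAction_single]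
  exact Finsupp.single_apply

section CharSpan

variable {G : Type} [Group G] {f : G → ℂ}

theorem apply_conj_of_mem_charSpan (hf : f ∈ charSpan G) (g x : G) : f (x⁻¹ * g * x) = f g := by
  induction hf using Submodule.span_induction with
  | mem _ hχ =>
    obtain ⟨V, rfl⟩ := hχ
    simpa using V.char_conj g x⁻¹
  | zero => rfl
  | add _ _ _ _ ih₁ ih₂ => simp [ih₁, ih₂]
  | smul _ _ _ ih => simp [ih]

theorem exists_apply_pow_eq_aeval_of_mem_charSpan (hf : f ∈ charSpan G) {x : G} {n : ℕ}
    (hn : 0 < n) (hxn : x ^ n = 1) {ζ : ℂ} (hζ : IsPrimitiveRoot ζ n) :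
    ∃ p : ℚ[X], ∀ k : ℕ, f (x ^ k) = aeval (ζ ^ k) p := by
  induction hf using Submodule.span_induction with
  | mem _ hχ =>
    obtain ⟨V, rfl⟩ := hχ
    simpa [FDRep.character] using
      Module.End.exists_trace_pow_eq_aeval (u := V.ρ x) hn (by rw [← map_pow, hxn, map_one]) hζ
  | zero => exact ⟨0, by simp⟩
  | add _ _ _ _ ih₁ ih₂ =>
    obtain ⟨p₁, hp₁⟩ := ih₁
    obtain ⟨p₂, hp₂⟩ := ih₂
    exact ⟨p₁ + p₂, by simp [hp₁, hp₂]⟩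
  | smul c _ _ ih =>
    obtain ⟨p, hp⟩ := ih
    exact ⟨c • p, by simp [hp]⟩

theorem Rrat.apply_eq_of_zpowers_eq (hf : f ∈ Rrat G) {x y : G} (hx : IsOfFinOrder x)
    (hxy : Subgroup.zpowers x = Subgroup.zpowers y) : f y = f x := by
  obtain ⟨hχ, hrat⟩ := Submodule.mem_inf.mp hf
  obtain ⟨k, hk, rfl⟩ := exists_pow_coprime_eq_of_zpowers_eq hx hxy
  obtain ⟨q, hq⟩ := hrat x
  have hn := hx.orderOf_pos
  set ζ := Complex.exp (2 * Real.pi * Complex.I / orderOf x)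
  have hζ : IsPrimitiveRoot ζ (orderOf x) := Complex.isPrimitiveRoot_exp _ hn.ne'
  obtain ⟨p, hp⟩ := exists_apply_pow_eq_aeval_of_mem_charSpan hχ hn (pow_orderOf_eq_one x) hζ
  have hpζ : aeval ζ p = (q : ℂ) := by simpa [hq] using (hp 1).symm
  rw [hp, hζ.aeval_pow_eq_of_aeval_eq_ratCast hn hk hpζ, hq]

theorem Rrat.exists_eq_comp_zpowers [Finite G] (hf : f ∈ Rrat G) :
    ∃ v : Subgroup G → ℚ, ∀ g, f g = v (Subgroup.zpowers g) := by
  choose w hw using (Submodule.mem_inf.mp hf).2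
  have hfac : Function.FactorsThrough w Subgroup.zpowers := fun x y hxy => by
    have := Rrat.apply_eq_of_zpowers_eq hf (isOfFinOrder_of_finite x) hxy
    exact_mod_cast (hw x).symm.trans (this.symm.trans (hw y))
  exact ⟨Function.extend Subgroup.zpowers w 0, fun g => by rw [hfac.extend_apply, hw]⟩

end CharSpan

section IndTriv

variable {G : Type} [Group G] [Fintype G]

theorem card_conj_mem_eq_natCard_mul (H : Subgroup G) (g : G) :
    #{x : G | x⁻¹ * g * x ∈ H} = Nat.card H * #{c : G ⧸ H | g • c = c} := by
  have hfix (x : G) : x⁻¹ * g * x ∈ H ↔ g • (x : G ⧸ H) = x := by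
    rw [MulAction.Quotient.smul_mk, QuotientGroup.eq, ← H.inv_mem_iff]
    simp [mul_assoc]
  simp_rw [hfix, ← Fintype.card_subtype, ← Nat.card_eq_fintype_card]
  exact QuotientGroup.card_preimage_mk H {c | g • c = c}

theorem indTrivChar_apply (H : Subgroup G) (g : G) :
    IndTrivChar H g = #{c : G ⧸ H | g • c = c} := by
  rw [IndTrivChar, indChar]
  simp only [dite_eq_ite]
  rw [Finset.sum_boole, card_conj_mem_eq_natCard_mul]
  push_cast
  rw [inv_mul_cancel_left₀ (by simp)]

theorem indTrivChar_mem_Rrat (H : Subgroup G) : IndTrivChar H ∈ Rrat G := by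
  have hperm : IndTrivChar H = (FDRep.of (Representation.ofMulAction ℂ G (G ⧸ H))).character := by
    ext g
    rw [indTrivChar_apply]
    convert (Representation.character_ofMulAction (k := ℂ) g).symm <;> rfl
  rw [Rrat, Submodule.mem_inf]
  refine ⟨Submodule.subset_span ⟨_, hperm⟩, fun g => ?_⟩
  exact ⟨#{c : G ⧸ H | g • c = c}, by rw [indTrivChar_apply, Rat.cast_natCast]⟩

theorem natCard_smul_indTrivChar (C : Subgroup G) :
    (Nat.card C : ℚ) • IndTrivChar C = fun g => (#{x : G | x⁻¹ * g * x ∈ C} : ℂ) := by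
  ext g
  simp only [Pi.smul_apply, IndTrivChar, indChar, dite_eq_ite, Rat.smul_def, Rat.cast_natCast]
  rw [Finset.sum_boole, mul_inv_cancel_left₀ (by simp)]

noncomputable def conjZpowersCount (C : Subgroup G) : G → ℂ :=
  fun g => #{x : G | Subgroup.zpowers (x⁻¹ * g * x) = C}

theorem sum_conjZpowersCount_le (C : Subgroup G) :
    ∑ D ∈ {D | D ≤ C}, conjZpowersCount D = fun g => (#{x : G | x⁻¹ * g * x ∈ C} : ℂ) := by
  ext g
  have h := sum_card_fiberwise_eq_card_filter univ {D | D ≤ C}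
    fun x => Subgroup.zpowers (x⁻¹ * g * x)
  simp only [mem_filter, mem_univ, true_and, Subgroup.zpowers_le] at h
  simp only [Finset.sum_apply, conjZpowersCount]
  exact_mod_cast h

theorem conjZpowersCount_mem_indTrivSpan (C : Subgroup G) :
    conjZpowersCount C ∈ indTrivSpan G := by
  induction C using WellFoundedLT.induction with
  | ind C ih =>
  have hsplit : filter (· ≤ C) univ = insert C (filter (· < C) univ) := by
    ext D
    simp [le_iff_lt_or_eq, or_comm]
  have h := sum_conjZpowersCount_le C
  rw [← natCard_smul_indTrivChar, hsplit, Finset.sum_insert (by simp), ← eq_sub_iff_add_eq] at h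
  rw [h]
  exact sub_mem (Submodule.smul_mem _ _ (Submodule.subset_span ⟨C, rfl⟩))
    (sum_mem fun D hD => ih D (Finset.mem_filter.mp hD).2)

theorem mem_indTrivSpan_of_eq_comp_zpowers_conj {f : G → ℂ} (v : Subgroup G → ℚ)
    (hv : ∀ g x, f g = v (Subgroup.zpowers (x⁻¹ * g * x))) : f ∈ indTrivSpan G := by
  have hf : f = ∑ C, (v C / Fintype.card G : ℚ) • conjZpowersCount C := by
    ext g
    simp only [Finset.sum_apply, Pi.smul_apply, conjZpowersCount, Rat.smul_def, card_filter]
    push_cast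
    simp only [mul_sum, mul_ite, mul_one, mul_zero]
    rw [sum_comm]
    simp only [sum_ite_eq, mem_univ, ↓reduceIte, ← hv, sum_const, card_univ, nsmul_eq_mul]
    field_simp
  rw [hf]
  exact sum_mem fun C _ => Submodule.smul_mem _ _ (conjZpowersCount_mem_indTrivSpan C)

end IndTriv

/-- `R_rat(G)` is spanned as a ℚ-vector space by the induced characters
`Ind_H^G 1` over all subgroups `H ≤ G`. -/
theorem rrat_eq_span_indTriv (G : Type) [Group G] [Fintype G] :
    Rrat G = indTrivSpan G := by
  refine le_antisymm (fun f hf => ?_) (Submodule.span_le.mpr ?_)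
  · obtain ⟨v, hv⟩ := Rrat.exists_eq_comp_zpowers hf
    refine mem_indTrivSpan_of_eq_comp_zpowers_conj v fun g x => ?_
    rw [← hv, apply_conj_of_mem_charSpan (Submodule.mem_inf.mp hf).1]
  · rintro _ ⟨H, rfl⟩
    exact indTrivChar_mem_Rrat H
end

section
/- Let G be cyclic of order p^r generated by a, p prime, and let φ_k be the character with φ_k(a) = exp(2kπi/p^r) where p does not divide k. Let K/ℚ be a finite Galois extension containing the p^r-th roots of unity. Then (1/[K:ℚ]) Σ_{g ∈ Gal(K/ℚ)} g.φ_k = (1/(p^{r-1}(p-1))) ( Σ_{j=0}^{p^r-1} φ_j − Σ_{j=0}^{p^{r-1}-1} φ_{jp} ). -/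
open scoped BigOperators Classical

/-! Evaluate both sides at `a ^ n`. Since `ζ ^ k` is again a primitive `p ^ r`-th root of
unity, it is a Galois conjugate of `ζ`, so the Galois sum of `φ_k` equals that of `φ_1`. The
cyclotomic character `Gal(K/ℚ) → (ZMod (p ^ r))ˣ` is onto, so each unit is hit `[K:ℚ] / φ(p ^ r)`
times and the Galois sum of `ζ ^ n` is that multiple of `∑ ζ ^ (j n)` over the exponents
`j < p ^ r` prime to `p`, i.e. all exponents minus the multiples of `p`. -/

theorem MonoidHom.sum_comp_of_surjective {A B M : Type*} [Group A] [Fintype A] [Group B]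
    [Fintype B] [AddCommMonoid M] (χ : A →* B) (hχ : Function.Surjective χ) (f : B → M) :
    ∑ a, f (χ a) = Nat.card χ.ker • ∑ b, f b := by
  have hfiber : ∀ b, Finset.card {a | χ a = b} = Nat.card χ.ker := fun b => by
    rw [MonoidHom.card_fiber_eq_of_mem_range χ (hχ b) ⟨1, map_one χ⟩,
      ← Fintype.card_subtype, ← Nat.card_eq_fintype_card]
    rfl
  rw [← Finset.sum_fiberwise Finset.univ χ, Finset.smul_sum]
  refine Finset.sum_congr rfl fun b _ => ?_
  rw [Finset.sum_congr rfl fun a ha => congrArg f (Finset.mem_filter.mp ha).2,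
    Finset.sum_const, hfiber]

theorem MonoidHom.card_eq_card_ker_mul_card_of_surjective {A B : Type*} [Group A] [Fintype A]
    [Group B] [Fintype B] (χ : A →* B) (hχ : Function.Surjective χ) :
    Fintype.card A = Nat.card χ.ker * Fintype.card B := by
  simpa using χ.sum_comp_of_surjective hχ (fun _ => (1 : ℕ))

theorem ZMod.sum_units_val {M : Type*} [AddCommMonoid M] (n : ℕ) [NeZero n] (f : ℕ → M) :
    ∑ u : (ZMod n)ˣ, f (u : ZMod n).val = ∑ j ∈ Finset.range n with j.Coprime n, f j := by
  refine Finset.sum_bij (fun u _ => (u : ZMod n).val) (fun u _ => ?_) (fun u _ v _ h => ?_)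
    (fun j hj => ?_) fun _ _ => rfl
  · exact Finset.mem_filter.mpr
      ⟨Finset.mem_range.mpr (ZMod.val_lt _), ZMod.val_coe_unit_coprime u⟩
  · exact Units.ext (ZMod.val_injective n h)
  · obtain ⟨hjn, hcop⟩ := Finset.mem_filter.mp hj
    refine ⟨ZMod.unitOfCoprime j hcop, Finset.mem_univ _, ?_⟩
    simp [ZMod.val_natCast, Nat.mod_eq_of_lt (Finset.mem_range.mp hjn)]

theorem Finset.sum_range_mul_filter_dvd {M : Type*} [AddCommMonoid M] (m p : ℕ) (hp : 0 < p)
    (f : ℕ → M) :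
    ∑ j ∈ Finset.range (m * p) with p ∣ j, f j = ∑ j ∈ Finset.range m, f (j * p) := by
  refine (Finset.sum_nbij' (· * p) (· / p) ?_ ?_ ?_ ?_ fun _ _ => rfl).symm
  · intro j hj
    simp only [Finset.mem_filter, Finset.mem_range] at hj ⊢
    exact ⟨Nat.mul_lt_mul_of_pos_right hj hp, dvd_mul_left p j⟩
  · intro j hj
    simp only [Finset.mem_filter, Finset.mem_range] at hj ⊢
    exact (Nat.div_lt_iff_lt_mul hp).mpr hj.1
  · intro j _
    exact Nat.mul_div_cancel j hp
  · intro j hj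
    exact Nat.div_mul_cancel (Finset.mem_filter.mp hj).2

theorem Nat.Prime.sum_range_pow_filter_coprime {M : Type*} [AddCommGroup M] {p r : ℕ}
    (hp : p.Prime) (hr : r ≠ 0) (f : ℕ → M) :
    ∑ j ∈ Finset.range (p ^ r) with j.Coprime (p ^ r), f j =
      ∑ j ∈ Finset.range (p ^ r), f j - ∑ j ∈ Finset.range (p ^ (r - 1)), f (j * p) := by
  have hpr : p ^ r = p ^ (r - 1) * p := by rw [← pow_succ, Nat.sub_add_cancel (by omega)]
  have hcop : ∀ j, j.Coprime (p ^ r) ↔ ¬ p ∣ j := fun j => by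
    rw [Nat.coprime_pow_right_iff (by omega), Nat.coprime_comm, hp.coprime_iff_not_dvd]
  have hdvd := Finset.sum_range_mul_filter_dvd (p ^ (r - 1)) p hp.pos f
  rw [← hpr] at hdvd
  rw [eq_sub_iff_add_eq, Finset.filter_congr fun j _ => hcop j, ← hdvd,
    Finset.sum_filter_not_add_sum_filter]

namespace IsPrimitiveRoot

variable {K M : Type*} [Field K] [CharZero K] [AddCommMonoid M] {n : ℕ} {ζ ζ' : K}

theorem exists_algEquiv_apply_eq [Normal ℚ K] (hn : 0 < n) (hζ : IsPrimitiveRoot ζ n)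
    (hζ' : IsPrimitiveRoot ζ' n) : ∃ σ : K ≃ₐ[ℚ] K, σ ζ = ζ' := by
  apply minpoly.exists_algEquiv_of_root (Algebra.IsAlgebraic.isAlgebraic ζ')
  rw [← Polynomial.cyclotomic_eq_minpoly_rat hζ' hn, Polynomial.cyclotomic_eq_minpoly_rat hζ hn]
  exact minpoly.aeval ℚ ζ

theorem autToPow_surjective [Normal ℚ K] [NeZero n] (hζ : IsPrimitiveRoot ζ n) :
    Function.Surjective (hζ.autToPow ℚ) := by
  intro u
  obtain ⟨σ, hσ⟩ := hζ.exists_algEquiv_apply_eq (NeZero.pos n)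
    (hζ.pow_of_coprime _ (ZMod.val_coe_unit_coprime u))
  refine ⟨σ, Units.ext (ZMod.val_injective n (hζ.pow_inj (ZMod.val_lt _) (ZMod.val_lt _) ?_))⟩
  rw [autToPow_spec ℚ hζ, hσ]

theorem sum_algEquiv_apply_eq [FiniteDimensional ℚ K] [Normal ℚ K] (hn : 0 < n)
    (hζ : IsPrimitiveRoot ζ n) (hζ' : IsPrimitiveRoot ζ' n) (F : K → M) :
    ∑ g : K ≃ₐ[ℚ] K, F (g ζ') = ∑ g : K ≃ₐ[ℚ] K, F (g ζ) := by
  obtain ⟨σ, rfl⟩ := hζ.exists_algEquiv_apply_eq hn hζ'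
  exact Fintype.sum_equiv (Equiv.mulRight σ) _ _ fun g => rfl

theorem totient_smul_sum_algEquiv_apply [FiniteDimensional ℚ K] [IsGalois ℚ K] [NeZero n]
    (hζ : IsPrimitiveRoot ζ n) (F : K → M) :
    n.totient • ∑ g : K ≃ₐ[ℚ] K, F (g ζ) =
      Module.finrank ℚ K • ∑ j ∈ Finset.range n with j.Coprime n, F (ζ ^ j) := by
  have hsurj := hζ.autToPow_surjective
  have hcard : Module.finrank ℚ K = Nat.card (hζ.autToPow ℚ).ker * n.totient := by
    rw [← IsGalois.card_aut_eq_finrank, Nat.card_eq_fintype_card,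
      MonoidHom.card_eq_card_ker_mul_card_of_surjective _ hsurj, ZMod.card_units_eq_totient]
  calc n.totient • ∑ g : K ≃ₐ[ℚ] K, F (g ζ)
      = n.totient • ∑ g : K ≃ₐ[ℚ] K, F (ζ ^ (hζ.autToPow ℚ g : ZMod n).val) := by
        simp only [autToPow_spec ℚ hζ]
    _ = Module.finrank ℚ K • ∑ j ∈ Finset.range n with j.Coprime n, F (ζ ^ j) := by
        rw [MonoidHom.sum_comp_of_surjective _ hsurj (fun u => F (ζ ^ (u : ZMod n).val)),
          ZMod.sum_units_val n (fun j => F (ζ ^ j)), smul_smul, hcard, mul_comm]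

end IsPrimitiveRoot

/-- Galois average of a primitive character of a cyclic `p`-group:
`(1/[K:ℚ]) Σ_{g ∈ Gal(K/ℚ)} g.φ_k
  = (1/(p^{r-1}(p-1))) (Σ_{j<p^r} φ_j − Σ_{j<p^{r-1}} φ_{jp})` when `p ∤ k`. -/
theorem galois_average_primitive_character (p r : ℕ) (hp : p.Prime) (hr : 1 ≤ r)
    (K : Type*) [Field K] [CharZero K] [FiniteDimensional ℚ K] [IsGalois ℚ K]
    (ζ : K) (hζ : IsPrimitiveRoot ζ (p ^ r))
    (G : Type*) [Group G] (a : G) (ha : orderOf a = p ^ r)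
    (hgen : ∀ g : G, g ∈ Subgroup.zpowers a)
    (φ : ℕ → G → K) (hφ : ∀ k n : ℕ, φ k (a ^ n) = ζ ^ (k * n))
    (k : ℕ) (hk : ¬ p ∣ k) :
    ((Module.finrank ℚ K : ℚ))⁻¹ • ∑ g : K ≃ₐ[ℚ] K, (⇑g ∘ φ k) =
      (((p ^ (r - 1) * (p - 1) : ℕ) : ℚ))⁻¹ •
        ((∑ j ∈ Finset.range (p ^ r), φ j) -
          ∑ j ∈ Finset.range (p ^ (r - 1)), φ (j * p)) := by
  have hN : 0 < p ^ r := pow_pos hp.pos r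
  have : NeZero (p ^ r) := ⟨hN.ne'⟩
  have hζk : IsPrimitiveRoot (ζ ^ k) (p ^ r) :=
    hζ.pow_of_coprime k (Nat.Coprime.pow_right r ((hp.coprime_iff_not_dvd.mpr hk).symm))
  funext x
  obtain ⟨n, rfl⟩ := (orderOf_pos_iff.mp (ha ▸ hN)).mem_powers_iff_mem_zpowers.mpr (hgen x)
  have hprimitive : ∑ g : K ≃ₐ[ℚ] K, g (ζ ^ (k * n)) = ∑ g : K ≃ₐ[ℚ] K, g ζ ^ n := by
    rw [← hζ.sum_algEquiv_apply_eq hN hζk (· ^ n)]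
    simp only [pow_mul, map_pow]
  have hcount := hζ.totient_smul_sum_algEquiv_apply (· ^ n)
  rw [Nat.totient_prime_pow hp hr, hp.sum_range_pow_filter_coprime (by omega)] at hcount
  simp only [Pi.smul_apply, Finset.sum_apply, Pi.sub_apply, Function.comp_apply, hφ, hprimitive]
  have hfinrank : (Module.finrank ℚ K : ℚ) ≠ 0 := Nat.cast_ne_zero.mpr Module.finrank_pos.ne'
  have htotient : ((p ^ (r - 1) * (p - 1) : ℕ) : ℚ) ≠ 0 := by
    rw [← Nat.totient_prime_pow hp hr, Nat.cast_ne_zero]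
    exact (Nat.totient_pos.mpr hN).ne'
  rw [inv_smul_eq_iff₀ hfinrank, smul_comm, eq_inv_smul_iff₀ htotient, Nat.cast_smul_eq_nsmul,
    Nat.cast_smul_eq_nsmul]
  simpa only [← pow_mul] using hcount
end
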